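/- arXiv:1812.05505 — 3 statements merged into one kernel-verified Lean document; each statement's English description precedes it below -/
import Mathlib

section
/- Let 𝕃 be a field of characteristic zero, let W ∈ 𝕃[t_0, t_1, …, t_n] be a squarefree (reduced) polynomial, and let D be a positive integer. If W(0, t_1, …, t_n) is not the zero polynomial, then the polynomial W(T_0^D, t_1, …, t_n), obtained by substituting T_0^D for t_0, is squarefree in 𝕃[T_0, t_1, …, t_n]. -/
/-!
Viewing `W` as a polynomial `f` in `t₀` over `R = 𝕃[t₁, …, tₙ]`, the substitution is
`expand D f` and the hypothesis says `f(0) ≠ 0`. Over the fraction field `K` of `R`, `f` stays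
squarefree (Gauss's lemma), hence separable, and `(expand D f)' = D t₀^(D-1) · expand D f'` is
coprime to `expand D f` because `D` is a unit and `t₀ ∤ expand D f`. A square factor of
`expand D f` in `R[t₀]` therefore has degree zero, i.e. is a constant `c`, and then `c²`
already divides every coefficient of `f`.
-/

open Polynomial

theorem Squarefree.map_mulEquiv {M N : Type*} [Monoid M] [Monoid N] (e : M ≃* N) {m : M}
    (hm : Squarefree m) : Squarefree (e m) := fun x hx => by
  simpa using (hm (e.symm x) (by simpa using map_dvd e.symm hx)).map e

namespace Polynomial

section CommRing

variable {R : Type*} [CommRing R]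

theorem isCoprime_X_of_isUnit_coeff_zero {f : R[X]} (h : IsUnit (f.coeff 0)) :
    IsCoprime f X := by
  have hC : IsCoprime (C (f.coeff 0)) X := by
    have := (isCoprime_mul_unit_left_left (isUnit_C.mpr h) 1 X).mpr isCoprime_one_left
    rwa [mul_one] at this
  have := hC.add_mul_left_left (divX f)
  rwa [add_comm, X_mul_divX_add] at this

theorem Separable.expand {f : R[X]} (hf : f.Separable) {D : ℕ} (hDu : IsUnit (D : R))
    (h0 : IsUnit (f.coeff 0)) : (Polynomial.expand R D f).Separable := by
  obtain rfl | hD := D.eq_zero_or_pos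
  · have := subsingleton_of_zero_eq_one (isUnit_zero_iff.mp (by simpa using hDu) : (0 : R) = 1)
    exact ⟨0, 0, Subsingleton.elim _ _⟩
  rw [Separable, derivative_expand]
  have hX : IsCoprime (Polynomial.expand R D f) X :=
    isCoprime_X_of_isUnit_coeff_zero (by simpa [coeff_expand hD] using h0)
  refine ((isCoprime_expand hD.ne').mpr hf).mul_right ?_
  rw [← C_eq_natCast]
  exact (isCoprime_mul_unit_left_right (isUnit_C.mpr hDu) _ _).mpr hX.pow_right

theorem squarefree_of_squarefree_map {S : Type*} [CommRing S] [IsDomain S] {φ : R →+* S}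
    (hφ : Function.Injective φ) {f : R[X]} (hC : ∀ r : R, C r * C r ∣ f → IsUnit r)
    (hf : Squarefree (f.map φ)) : Squarefree f := by
  intro p hp
  have hpS : IsUnit (p.map φ) :=
    hf _ (by simpa only [Polynomial.map_mul] using Polynomial.map_dvd φ hp)
  have hdeg : p.natDegree = 0 := by
    rw [← natDegree_map_eq_of_injective hφ p]
    exact natDegree_eq_zero_of_isUnit hpS
  rw [eq_C_of_natDegree_eq_zero hdeg] at hp ⊢
  exact isUnit_C.mpr (hC _ hp)

end CommRing

section FractionMap

variable {R K : Type*} [CommRing R] [IsDomain R] [Field K] [Algebra R K] [IsFractionRing R K]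

theorem exists_isPrimitive_map_associated [NormalizedGCDMonoid R] {g : K[X]} (hg : g ≠ 0) :
    ∃ q : R[X], q.IsPrimitive ∧ Associated (q.map (algebraMap R K)) g := by
  obtain ⟨c, hc, hcg⟩ := IsLocalization.integerNormalization_spec (nonZeroDivisors R) g
  set a := IsLocalization.integerNormalization (nonZeroDivisors R) g
  refine ⟨a.primPart, a.isPrimitive_primPart, ?_⟩
  have ha : a.content ≠ 0 :=
    content_eq_zero_iff.not.mpr (IsFractionRing.integerNormalization_eq_zero_iff.not.mpr hg)
  have hunit {r : R} (hr : r ≠ 0) : IsUnit (C (algebraMap R K r)) :=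
    isUnit_C.mpr ((map_ne_zero_iff _ (IsFractionRing.injective R K)).mpr hr).isUnit
  calc Associated (a.primPart.map (algebraMap R K)) (a.map (algebraMap R K)) := by
        conv_rhs => rw [a.eq_C_content_mul_primPart, Polynomial.map_mul, map_C]
        exact (associated_unit_mul_left _ _ (hunit ha)).symm
    _ = C (algebraMap R K c) * g := by rw [hcg, Algebra.smul_def]; rfl
    Associated _ g := associated_unit_mul_left _ _ (hunit (nonZeroDivisors.ne_zero hc))

theorem _root_.Squarefree.map_fraction_map [IsGCDMonoid R] {f : R[X]} (hf : Squarefree f) :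
    Squarefree (f.map (algebraMap R K)) := by
  let : NormalizedGCDMonoid R := Nonempty.some inferInstance
  intro g hg
  have hg0 : g ≠ 0 := by
    rintro rfl
    simp [Polynomial.map_eq_zero_iff (IsFractionRing.injective R K), hf.ne_zero] at hg
  obtain ⟨q, hq, hqg⟩ := exists_isPrimitive_map_associated (R := R) hg0
  have hqq : q * q ∣ f := (hq.mul hq).dvd_of_fraction_map_dvd_fraction_map (K := K) <| by
    rw [Polynomial.map_mul]
    exact ((hqg.mul_mul hqg).dvd_iff_dvd_left).mpr hg
  exact hqg.isUnit ((hq.isUnit_iff_isUnit_map (K := K)).mp (hf q hqq))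

end FractionMap

theorem _root_.Squarefree.expand {R : Type*} [CommRing R] [IsDomain R] [IsGCDMonoid R]
    [CharZero R] {f : R[X]} (hf : Squarefree f) {D : ℕ} (hD : 0 < D) (h0 : f.coeff 0 ≠ 0) :
    Squarefree (expand R D f) := by
  have hinj := IsFractionRing.injective R (FractionRing R)
  refine squarefree_of_squarefree_map hinj (fun r hr => ?_) ?_
  · have hrf : C r * C r ∣ f := by
      rw [← C_mul, C_dvd_iff_dvd_coeff] at hr ⊢
      intro i
      simpa [coeff_expand_mul hD] using hr (i * D)
    exact isUnit_C.mp (hf _ hrf)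
  · rw [map_expand, ← PerfectField.separable_iff_squarefree]
    refine Separable.expand ?_ ?_ ?_
    · exact PerfectField.separable_iff_squarefree.mpr hf.map_fraction_map
    · exact (Nat.cast_ne_zero.mpr hD.ne').isUnit
    · rw [coeff_map]
      exact ((map_ne_zero_iff _ hinj).mpr h0).isUnit

end Polynomial

namespace MvPolynomial

variable {R : Type*} [CommSemiring R] {n : ℕ}

theorem finSuccEquiv_aeval_X_zero_pow (D : ℕ) (p : MvPolynomial (Fin (n + 1)) R) :
    finSuccEquiv R n (aeval (fun i => if i = 0 then X 0 ^ D else X i) p) =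
      Polynomial.expand _ D (finSuccEquiv R n p) := by
  suffices (finSuccEquiv R n).toAlgHom.comp (aeval fun i => if i = 0 then X 0 ^ D else X i) =
      ((Polynomial.expand _ D).restrictScalars R).comp (finSuccEquiv R n).toAlgHom from
    DFunLike.congr_fun this p
  refine algHom_ext fun i => Fin.cases ?_ (fun j => ?_) i <;>
    simp [Fin.succ_ne_zero, finSuccEquiv_X_zero, finSuccEquiv_X_succ]

theorem finSuccEquiv_aeval_X_zero_zero (p : MvPolynomial (Fin (n + 1)) R) :
    finSuccEquiv R n (aeval (fun i => if i = 0 then 0 else X i) p) =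
      Polynomial.C ((finSuccEquiv R n p).coeff 0) := by
  suffices (finSuccEquiv R n).toAlgHom.comp (aeval fun i => if i = 0 then 0 else X i) =
      ((Polynomial.CAlgHom.comp (Polynomial.aeval 0)).restrictScalars R).comp
        (finSuccEquiv R n).toAlgHom by
    simpa [Polynomial.coeff_zero_eq_eval_zero] using DFunLike.congr_fun this p
  refine algHom_ext fun i => Fin.cases ?_ (fun j => ?_) i <;>
    simp [Fin.succ_ne_zero, finSuccEquiv_X_zero, finSuccEquiv_X_succ]

end MvPolynomial

/-- **Squarefreeness is preserved under the substitution `t_0 ↦ T_0^D`.**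
If `W ∈ 𝕃[t_0, …, t_n]` is squarefree over a field of characteristic zero and
`W(0, t_1, …, t_n) ≠ 0`, then `W(T_0^D, t_1, …, t_n)` is squarefree. -/
theorem squarefree_subst_pow
    {𝕃 : Type*} [Field 𝕃] [CharZero 𝕃] {n : ℕ}
    (W : MvPolynomial (Fin (n + 1)) 𝕃) (hW : Squarefree W)
    (D : ℕ) (hD : 0 < D)
    (h0 : MvPolynomial.aeval
        (fun i : Fin (n + 1) =>
          if i = 0 then (0 : MvPolynomial (Fin (n + 1)) 𝕃) else MvPolynomial.X i) W ≠ 0) :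
    Squarefree
      (MvPolynomial.aeval
        (fun i : Fin (n + 1) =>
          if i = 0 then (MvPolynomial.X 0 : MvPolynomial (Fin (n + 1)) 𝕃) ^ D
          else MvPolynomial.X i) W) := by
  set e := MvPolynomial.finSuccEquiv 𝕃 n
  have hcoeff : (e W).coeff 0 ≠ 0 := by
    contrapose! h0
    apply e.injective
    rw [MvPolynomial.finSuccEquiv_aeval_X_zero_zero, h0, C_0, map_zero]
  have hexp : Squarefree (expand _ D (e W)) := (hW.map_mulEquiv e.toMulEquiv).expand hD hcoeff
  rw [← MvPolynomial.finSuccEquiv_aeval_X_zero_pow] at hexp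
  simpa [e] using hexp.map_mulEquiv e.symm.toMulEquiv
end

section
/- Let K be an algebraically closed field of characteristic zero and let f_1, …, f_s ∈ K[x_1, …, x_n] be polynomials such that 1 belongs to the ideal generated by f_1, …, f_s. Consider the map Φ : K^{n+1} → K^{s+n} defined by Φ(x_1, …, x_n, z) = (z·f_1(x), …, z·f_s(x), x_1, …, x_n). Then Φ is injective and its image is Zariski closed in K^{s+n}, i.e., Im(Φ) equals the zero locus of its vanishing ideal: Im(Φ) = Z(I(Im(Φ))). -/
/-!
If `∑ gᵢ fᵢ = 1`, then `z = ∑ gᵢ(x) · z fᵢ(x)`, so `(x, z)` is recovered polynomially from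
`Φ(x, z)`: `Φ` has a polynomial left inverse `ψ = phiInv g`. Hence `Φ` is injective, and its
image is the set of points `y` with `Φ(ψ(y)) = y`, which is cut out by the polynomial equations
`yᵢ = (∑ₖ gₖ(x) yₖ) fᵢ(x)`, where `x` denotes the last `n` coordinates of `y`.
-/

/-- The map `Φ : K^{n+1} → K^{s+n}`, `Φ(x, z) = (z·f_1(x), …, z·f_s(x), x)`, where a point
of `K^{n+1}` is written as `(x, z)` with `x` its first `n` coordinates and `z` its last
coordinate. -/
noncomputable def Phi {n s : ℕ} {K : Type*} [CommSemiring K] (f : Fin s → MvPolynomial (Fin n) K) :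
    (Fin (n + 1) → K) → (Fin (s + n) → K) :=
  fun w =>
    Fin.append
      (fun i : Fin s =>
        w (Fin.last n) * MvPolynomial.eval (fun j : Fin n => w (Fin.castSucc j)) (f i))
      (fun j : Fin n => w (Fin.castSucc j))

open MvPolynomial

namespace MvPolynomial

variable {σ k K : Type*} [Field k] [Field K] [Algebra k K]

theorem zeroLocus_vanishingIdeal_zeroLocus (I : Ideal (MvPolynomial σ k)) :
    zeroLocus K (vanishingIdeal k (zeroLocus K I)) = zeroLocus K I :=
  zeroLocus_vanishingIdeal_galoisConnection.l_u_l_eq_l I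

end MvPolynomial

section Phi

variable {K : Type*} {n s : ℕ}

section CommSemiring

variable [CommSemiring K]

@[simp]
theorem Phi_castAdd (f : Fin s → MvPolynomial (Fin n) K) (w : Fin (n + 1) → K) (i : Fin s) :
    Phi f w (Fin.castAdd n i) = w (Fin.last n) * eval (fun j => w j.castSucc) (f i) := by
  simp [Phi]

@[simp]
theorem Phi_natAdd (f : Fin s → MvPolynomial (Fin n) K) (w : Fin (n + 1) → K) (j : Fin n) :
    Phi f w (Fin.natAdd s j) = w j.castSucc := by
  simp [Phi]

noncomputable def phiInv (g : Fin s → MvPolynomial (Fin n) K) (y : Fin (s + n) → K) :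
    Fin (n + 1) → K :=
  Fin.snoc (α := fun _ => K) (fun j => y (Fin.natAdd s j))
    (∑ i, eval (fun j => y (Fin.natAdd s j)) (g i) * y (Fin.castAdd n i))

@[simp]
theorem phiInv_castSucc (g : Fin s → MvPolynomial (Fin n) K) (y : Fin (s + n) → K) (j : Fin n) :
    phiInv g y j.castSucc = y (Fin.natAdd s j) := by
  simp [phiInv]

theorem phiInv_last (g : Fin s → MvPolynomial (Fin n) K) (y : Fin (s + n) → K) :
    phiInv g y (Fin.last n) =
      ∑ i, eval (fun j => y (Fin.natAdd s j)) (g i) * y (Fin.castAdd n i) := by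
  simp [phiInv]

variable {f g : Fin s → MvPolynomial (Fin n) K}

theorem leftInverse_phiInv_Phi (hg : ∑ i, g i * f i = 1) :
    Function.LeftInverse (phiInv g) (Phi f) := by
  intro w
  have hx : (fun j => Phi f w (Fin.natAdd s j)) = fun j => w j.castSucc :=
    funext (Phi_natAdd f w)
  have hgf :
      ∑ i, eval (fun j => w j.castSucc) (g i) * eval (fun j => w j.castSucc) (f i) = 1 := by
    simpa using congrArg (eval fun j => w j.castSucc) hg
  ext k
  induction k using Fin.lastCases with
  | last =>
    calc phiInv g (Phi f w) (Fin.last n)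
        = w (Fin.last n) * ∑ i, eval (fun j => w j.castSucc) (g i) *
            eval (fun j => w j.castSucc) (f i) := by
          simp only [phiInv_last, hx, Phi_castAdd, Finset.mul_sum]
          exact Finset.sum_congr rfl fun i _ => by ring
      _ = w (Fin.last n) := by rw [hgf, mul_one]
  | cast j => simp

theorem mem_range_Phi_iff (hg : ∑ i, g i * f i = 1) {y : Fin (s + n) → K} :
    y ∈ Set.range (Phi f) ↔
      ∀ i, y (Fin.castAdd n i) = Phi f (phiInv g y) (Fin.castAdd n i) := by
  constructor
  · rintro ⟨w, rfl⟩ i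
    rw [leftInverse_phiInv_Phi hg w]
  · intro h
    refine ⟨phiInv g y, funext fun k => ?_⟩
    induction k using Fin.addCases with
    | left i => exact (h i).symm
    | right j => simp

end CommSemiring

noncomputable def phiRangeEquation [CommRing K] (g f : Fin s → MvPolynomial (Fin n) K)
    (i : Fin s) : MvPolynomial (Fin (s + n)) K :=
  X (Fin.castAdd n i) -
    (∑ k, rename (Fin.natAdd s) (g k) * X (Fin.castAdd n k)) * rename (Fin.natAdd s) (f i)

theorem eval_phiRangeEquation [CommRing K] (g f : Fin s → MvPolynomial (Fin n) K)
    (y : Fin (s + n) → K) (i : Fin s) :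
    eval y (phiRangeEquation g f i) =
      y (Fin.castAdd n i) - Phi f (phiInv g y) (Fin.castAdd n i) := by
  simp only [phiRangeEquation, map_sub, map_mul, map_sum, eval_X, eval_rename, Phi_castAdd,
    phiInv_castSucc, phiInv_last]
  rfl

theorem range_Phi_eq_zeroLocus [Field K] {f g : Fin s → MvPolynomial (Fin n) K}
    (hg : ∑ i, g i * f i = 1) :
    Set.range (Phi f) = zeroLocus K (Ideal.span (Set.range (phiRangeEquation g f))) := by
  ext y
  simp only [zeroLocus_span, Set.forall_mem_range, Set.mem_ofPred_eq, aeval_eq_eval,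
    eval_phiRangeEquation, sub_eq_zero, mem_range_Phi_iff hg]

end Phi

theorem phi_injective_closed_image_general
    {K : Type*} [Field K] {n s : ℕ}
    (f : Fin s → MvPolynomial (Fin n) K)
    (h1 : (1 : MvPolynomial (Fin n) K) ∈ Ideal.span (Set.range f)) :
    Function.Injective (Phi f) ∧
      MvPolynomial.zeroLocus K (MvPolynomial.vanishingIdeal K (Set.range (Phi f))) =
        Set.range (Phi f) := by
  obtain ⟨g, hg⟩ := Ideal.mem_span_range_iff_exists_fun.mp h1
  refine ⟨(leftInverse_phiInv_Phi hg).injective, ?_⟩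
  rw [range_Phi_eq_zeroLocus hg, zeroLocus_vanishingIdeal_zeroLocus]

/-- **Injectivity and closedness of the graph-type map `Φ`.**
If `1 ∈ (f_1, …, f_s)`, then `Φ(x, z) = (z·f_1(x), …, z·f_s(x), x)` is injective and its
image is Zariski closed, i.e. it equals the zero locus of its vanishing ideal. -/
theorem phi_injective_closed_image
    {K : Type*} [Field K] [IsAlgClosed K] [CharZero K] {n s : ℕ}
    (f : Fin s → MvPolynomial (Fin n) K)
    (h1 : (1 : MvPolynomial (Fin n) K) ∈ Ideal.span (Set.range f)) :
    Function.Injective (Phi f) ∧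
      MvPolynomial.zeroLocus K (MvPolynomial.vanishingIdeal K (Set.range (Phi f))) =
        Set.range (Phi f) :=
  phi_injective_closed_image_general f h1
end

section
/- Let K be a field of characteristic zero, let I be an ideal of K[x_1, …, x_n], let G ∈ √I, and let φ ∈ K[T] be a univariate polynomial of the form φ(T) = T^m · ψ(T) with ψ ∈ K[T] satisfying ψ(0) ≠ 0. If φ(G) ∈ I, then G^m ∈ I. -/
open Polynomial

section

variable {R A : Type*} [CommRing R] [CommRing A] [Algebra R A]

theorem Polynomial.isUnit_aeval_of_isNilpotent {a : A} (ha : IsNilpotent a) {p : R[X]}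
    (hp : IsUnit (p.eval 0)) : IsUnit (aeval a p) := by
  have h0 : IsUnit (aeval (0 : A) p) := by
    rw [← coeff_zero_eq_aeval_zero', coeff_zero_eq_eval_zero]
    exact hp.map _
  exact isUnit_aeval_of_isUnit_aeval_of_isNilpotent_sub h0 (by simpa using ha)

/-- Modulo `I` the element `g` is nilpotent, so `ψ(g)` is a unit and can be cancelled. -/
theorem Ideal.pow_mem_of_aeval_X_pow_mul_mem {I : Ideal A} {g : A} (hg : g ∈ I.radical)
    {ψ : R[X]} (hψ : IsUnit (ψ.eval 0)) {m : ℕ} (h : aeval g (X ^ m * ψ) ∈ I) :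
    g ^ m ∈ I := by
  let π := Ideal.Quotient.mkₐ R I
  have hnil : IsNilpotent (π g) := by
    obtain ⟨k, hk⟩ := hg
    exact ⟨k, by rw [← map_pow]; exact Ideal.Quotient.eq_zero_iff_mem.2 hk⟩
  have hunit : IsUnit (aeval (π g) ψ) := isUnit_aeval_of_isNilpotent hnil hψ
  have hzero : π g ^ m * aeval (π g) ψ = 0 := by
    have : π (aeval g (X ^ m * ψ)) = 0 := Ideal.Quotient.eq_zero_iff_mem.2 h
    simpa only [map_mul, map_pow, aeval_X, aeval_algHom_apply] using this
  rw [← Ideal.Quotient.eq_zero_iff_mem, ← Ideal.Quotient.mkₐ_eq_mk R, map_pow]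
  exact hunit.mul_left_eq_zero.mp hzero

end

theorem pow_mem_of_comp_mem_general
    {K : Type*} [Field K] {n : ℕ}
    (I : Ideal (MvPolynomial (Fin n) K))
    (G : MvPolynomial (Fin n) K) (hG : G ∈ I.radical)
    (m : ℕ) (φ ψ : Polynomial K)
    (hφ : φ = Polynomial.X ^ m * ψ) (hψ : ψ.eval 0 ≠ 0)
    (hφG : Polynomial.aeval G φ ∈ I) :
    G ^ m ∈ I :=
  Ideal.pow_mem_of_aeval_X_pow_mul_mem hG (isUnit_iff_ne_zero.2 hψ) (hφ ▸ hφG)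

/-- **Stripping the unit factors of `φ`.**
If `G ∈ √I` and `φ(T) = T^m · ψ(T)` with `ψ(0) ≠ 0`, then `φ(G) ∈ I` implies `G^m ∈ I`. -/
theorem pow_mem_of_comp_mem
    {K : Type*} [Field K] [CharZero K] {n : ℕ}
    (I : Ideal (MvPolynomial (Fin n) K))
    (G : MvPolynomial (Fin n) K) (hG : G ∈ I.radical)
    (m : ℕ) (φ ψ : Polynomial K)
    (hφ : φ = Polynomial.X ^ m * ψ) (hψ : ψ.eval 0 ≠ 0)
    (hφG : Polynomial.aeval G φ ∈ I) :
    G ^ m ∈ I :=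
  pow_mem_of_comp_mem_general I G hG m φ ψ hφ hψ hφG
end
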